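/- Let H be a graph with no K_{2,t} minor (t ≥ 2), Q ⊆ V(H), and let 𝒫 be a maximal family of pairwise internally disjoint Q-paths of length at most h. Then the set Q′ of all vertices lying on paths of 𝒫 satisfies |Q′| ≤ (t+1)²(h+1)|Q|/2, and every Q-path of length at most h not in 𝒫 contains an internal vertex of some path in 𝒫. -/

import Mathlib

/-!
The nonempty interiors of the paths of `Pfam` are pairwise disjoint connected vertex sets, each
with a neighbour at both of its two ends in `Q`. Together with the singletons of `Q` they form a
model of a multigraph on `Q`. Two branch sets are joined by at most `t - 1` bridges, since `t`
of them would form a `K_{2,t}` minor; contracting one bridge with its two ends and discarding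
its parallel class removes a branch set, so by induction there are at most `(t - 1)|Q|`
bridges, each with at most `h - 1` vertices. For the second assertion, a common vertex of two
`Q`-paths that ends the second one lies in `Q`, so it also ends the first one.
-/

open SimpleGraph

def SimpleGraph.HasMinor {V W : Type*} (G : SimpleGraph V) (H : SimpleGraph W) : Prop :=
  ∃ B : W → Set V,
    (∀ w, (B w).Nonempty) ∧
    (∀ w, (G.induce (B w)).Connected) ∧
    (Pairwise fun w₁ w₂ => Disjoint (B w₁) (B w₂)) ∧
    (∀ w₁ w₂, H.Adj w₁ w₂ → ∃ a ∈ B w₁, ∃ b ∈ B w₂, G.Adj a b)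

/-- A `Q`-path of length at most `h`, packaged with its endpoints. -/
def IsQPathOf {V : Type*} (G : SimpleGraph V) (Q : Set V) (h : ℕ)
    (p : Σ u v : V, G.Walk u v) : Prop :=
  p.2.2.IsPath ∧ p.1 ∈ Q ∧ p.2.1 ∈ Q ∧
    (∀ y ∈ p.2.2.support, y ∈ Q → y = p.1 ∨ y = p.2.1) ∧ p.2.2.length ≤ h

/-- Two packaged paths are internally disjoint if every common vertex is an endpoint of
both of them. -/
def IntDisj {V : Type*} {G : SimpleGraph V} (p q : Σ u v : V, G.Walk u v) : Prop :=
  ∀ x ∈ p.2.2.support, x ∈ q.2.2.support →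
    (x = p.1 ∨ x = p.2.1) ∧ (x = q.1 ∨ x = q.2.1)

open Function

namespace SimpleGraph

variable {V : Type*} {G : SimpleGraph V}

def SetsAdj (G : SimpleGraph V) (A B : Set V) : Prop :=
  ∃ a ∈ A, ∃ b ∈ B, G.Adj a b

lemma SetsAdj.symm {A B : Set V} (h : G.SetsAdj A B) : G.SetsAdj B A :=
  let ⟨a, ha, b, hb, hab⟩ := h
  ⟨b, hb, a, ha, hab.symm⟩

lemma SetsAdj.mono {A A' B B' : Set V} (hA : A ⊆ A') (hB : B ⊆ B') (h : G.SetsAdj A B) :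
    G.SetsAdj A' B' :=
  let ⟨a, ha, b, hb, hab⟩ := h
  ⟨a, hA ha, b, hB hb, hab⟩

lemma SetsAdj.connected_induce_union {A B : Set V} (hA : (G.induce A).Connected)
    (hB : (G.induce B).Connected) (h : G.SetsAdj A B) : (G.induce (A ∪ B)).Connected :=
  let ⟨_, ha, _, hb, hab⟩ := h
  SimpleGraph.connected_induce_union hA.preconnected hB.preconnected ha hb hab

lemma hasMinor_completeBipartiteGraph {α β : Type*} (A : α → Set V) (B : β → Set V)
    (hA : ∀ a, (G.induce (A a)).Connected) (hB : ∀ b, (G.induce (B b)).Connected)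
    (hAA : Pairwise (Disjoint on A)) (hBB : Pairwise (Disjoint on B))
    (hAB : ∀ a b, Disjoint (A a) (B b)) (hadj : ∀ a b, G.SetsAdj (A a) (B b)) :
    G.HasMinor (completeBipartiteGraph α β) := by
  refine ⟨Sum.elim A B, ?_, ?_, ?_, ?_⟩
  · rintro (a | b)
    exacts [Set.nonempty_coe_sort.mp (hA a).nonempty, Set.nonempty_coe_sort.mp (hB b).nonempty]
  · rintro (a | b)
    exacts [hA a, hB b]
  · rintro (a | b) (a' | b') hne
    · exact hAA fun h => hne (congrArg _ h)
    · exact hAB a b'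
    · exact (hAB a' b).symm
    · exact hBB fun h => hne (congrArg _ h)
  · rintro (a | b) (a' | b') hab
    · simp at hab
    · exact hadj a b'
    · exact (hadj a' b).symm
    · simp at hab

/-- A model of a multigraph in `G`: the branch sets in `N` are its vertices, and each bridge
in `𝓘` is a subdivided edge between two of them. -/
structure BridgeSystem (G : SimpleGraph V) (N 𝓘 : Finset (Set V)) : Prop where
  connected_branch : ∀ B ∈ N, (G.induce B).Connected
  pairwiseDisjoint_branch : (N : Set (Set V)).PairwiseDisjoint id
  connected_bridge : ∀ I ∈ 𝓘, (G.induce I).Connected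
  pairwiseDisjoint_bridge : (𝓘 : Set (Set V)).PairwiseDisjoint id
  disjoint_bridge_branch : ∀ I ∈ 𝓘, ∀ B ∈ N, Disjoint I B
  exists_ends : ∀ I ∈ 𝓘, ∃ B ∈ N, ∃ C ∈ N, B ≠ C ∧ G.SetsAdj I B ∧ G.SetsAdj I C

namespace BridgeSystem

variable {N 𝓘 : Finset (Set V)} {B₁ B₂ I₀ : Set V}

open scoped Classical in
lemma card_parallel_le {t : ℕ} (hfree : ¬ G.HasMinor (completeBipartiteGraph (Fin 2) (Fin t)))
    (hS : G.BridgeSystem N 𝓘) (hB₁ : B₁ ∈ N) (hB₂ : B₂ ∈ N) (hne : B₁ ≠ B₂) :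
    {I ∈ 𝓘 | G.SetsAdj I B₁ ∧ G.SetsAdj I B₂}.card ≤ t - 1 := by
  set S := {I ∈ 𝓘 | G.SetsAdj I B₁ ∧ G.SetsAdj I B₂}
  by_contra! hlt
  have hle : t ≤ S.card := by omega
  let f : Fin t → Set V := fun i => (S.equivFin.symm (Fin.castLE hle i)).1
  have hfS : ∀ i, f i ∈ S := fun i => (S.equivFin.symm (Fin.castLE hle i)).2
  have hf𝓘 : ∀ i, f i ∈ 𝓘 := fun i => (Finset.mem_filter.mp (hfS i)).1
  have hfinj : f.Injective :=
    Subtype.val_injective.comp (S.equivFin.symm.injective.comp (Fin.castLE_injective hle))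
  refine hfree (hasMinor_completeBipartiteGraph ![B₁, B₂] f ?_
    (fun i => hS.connected_bridge _ (hf𝓘 i)) ?_
    (fun i j hij => hS.pairwiseDisjoint_bridge (hf𝓘 i) (hf𝓘 j) (hfinj.ne hij)) ?_ ?_)
  · simp [Fin.forall_fin_two, hS.connected_branch _ hB₁, hS.connected_branch _ hB₂]
  · have h₁₂ := hS.pairwiseDisjoint_branch hB₁ hB₂ hne
    intro i j hij
    fin_cases i <;> fin_cases j
    exacts [absurd rfl hij, h₁₂, h₁₂.symm, absurd rfl hij]
  · simp [Fin.forall_fin_two, fun i => (hS.disjoint_bridge_branch _ (hf𝓘 i) _ hB₁).symm,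
      fun i => (hS.disjoint_bridge_branch _ (hf𝓘 i) _ hB₂).symm]
  · simp [Fin.forall_fin_two, fun i => ((Finset.mem_filter.mp (hfS i)).2.1).symm,
      fun i => ((Finset.mem_filter.mp (hfS i)).2.2).symm]

lemma disjoint_merge (hS : G.BridgeSystem N 𝓘) (hB₁ : B₁ ∈ N) (hB₂ : B₂ ∈ N) (hI₀ : I₀ ∈ 𝓘)
    {C : Set V} (hC : C ∈ (N.erase B₁).erase B₂) : Disjoint (B₁ ∪ I₀ ∪ B₂) C := by
  simp only [Finset.mem_erase] at hC
  refine Disjoint.union_left (Disjoint.union_left ?_ ?_) ?_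
  · exact hS.pairwiseDisjoint_branch hB₁ hC.2.2 hC.2.1.symm
  · exact hS.disjoint_bridge_branch I₀ hI₀ C hC.2.2
  · exact hS.pairwiseDisjoint_branch hB₂ hC.2.2 hC.1.symm

lemma merge_ne (hS : G.BridgeSystem N 𝓘) (hB₁ : B₁ ∈ N) (hB₂ : B₂ ∈ N) (hI₀ : I₀ ∈ 𝓘)
    {C : Set V} (hC : C ∈ (N.erase B₁).erase B₂) : B₁ ∪ I₀ ∪ B₂ ≠ C := by
  have hB₁ne := Set.nonempty_coe_sort.mp (hS.connected_branch B₁ hB₁).nonempty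
  exact (hS.disjoint_merge hB₁ hB₂ hI₀ hC).ne
    (hB₁ne.mono (Set.subset_union_left.trans Set.subset_union_left)).ne_empty

open scoped Classical in
lemma exists_ends_merge (hS : G.BridgeSystem N 𝓘) (hB₁ : B₁ ∈ N) (hB₂ : B₂ ∈ N)
    (hI₀ : I₀ ∈ 𝓘) {I : Set V} (hI : I ∈ 𝓘) (hIpar : ¬(G.SetsAdj I B₁ ∧ G.SetsAdj I B₂)) :
    ∃ B ∈ insert (B₁ ∪ I₀ ∪ B₂) ((N.erase B₁).erase B₂),
      ∃ C ∈ insert (B₁ ∪ I₀ ∪ B₂) ((N.erase B₁).erase B₂),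
        B ≠ C ∧ G.SetsAdj I B ∧ G.SetsAdj I C := by
  obtain ⟨B, hB, C, hC, hBC, hIB, hIC⟩ := hS.exists_ends I hI
  have hsub : ∀ D, D = B₁ ∨ D = B₂ → D ⊆ B₁ ∪ I₀ ∪ B₂ := by
    rintro D (rfl | rfl)
    exacts [Set.subset_union_left.trans Set.subset_union_left, Set.subset_union_right]
  by_cases hBM : B = B₁ ∨ B = B₂ <;> by_cases hCM : C = B₁ ∨ C = B₂
  · exfalso
    rcases hBM with rfl | rfl <;> rcases hCM with rfl | rfl
    exacts [hBC rfl, hIpar ⟨hIB, hIC⟩, hIpar ⟨hIC, hIB⟩, hBC rfl]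
  · have hC' : C ∈ (N.erase B₁).erase B₂ := by simp_all
    exact ⟨_, Finset.mem_insert_self _ _, C, Finset.mem_insert_of_mem hC',
      hS.merge_ne hB₁ hB₂ hI₀ hC', hIB.mono subset_rfl (hsub B hBM), hIC⟩
  · have hB' : B ∈ (N.erase B₁).erase B₂ := by simp_all
    exact ⟨B, Finset.mem_insert_of_mem hB', _, Finset.mem_insert_self _ _,
      (hS.merge_ne hB₁ hB₂ hI₀ hB').symm, hIB, hIC.mono subset_rfl (hsub C hCM)⟩
  · exact ⟨B, Finset.mem_insert_of_mem (by simp_all), C, Finset.mem_insert_of_mem (by simp_all),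
      hBC, hIB, hIC⟩

open scoped Classical in
lemma merge (hS : G.BridgeSystem N 𝓘) (hB₁ : B₁ ∈ N) (hB₂ : B₂ ∈ N) (hI₀ : I₀ ∈ 𝓘)
    (h₁ : G.SetsAdj I₀ B₁) (h₂ : G.SetsAdj I₀ B₂) :
    G.BridgeSystem (insert (B₁ ∪ I₀ ∪ B₂) ((N.erase B₁).erase B₂))
      {I ∈ 𝓘 | ¬(G.SetsAdj I B₁ ∧ G.SetsAdj I B₂)} := by
  have hmemN : ∀ {C}, C ∈ (N.erase B₁).erase B₂ → C ∈ N :=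
    fun hC => Finset.mem_of_mem_erase (Finset.mem_of_mem_erase hC)
  refine ⟨?_, ?_, ?_, ?_, ?_, ?_⟩
  · rintro B hB
    obtain rfl | hB := Finset.mem_insert.mp hB
    · have hB₁I₀ := h₁.symm.connected_induce_union (hS.connected_branch B₁ hB₁)
        (hS.connected_bridge I₀ hI₀)
      exact (h₂.mono Set.subset_union_right subset_rfl).connected_induce_union hB₁I₀
        (hS.connected_branch B₂ hB₂)
    · exact hS.connected_branch B (hmemN hB)
  · rw [Finset.coe_insert]
    exact (hS.pairwiseDisjoint_branch.subset fun C hC => hmemN hC).insert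
      fun C hC _ => hS.disjoint_merge hB₁ hB₂ hI₀ hC
  · exact fun I hI => hS.connected_bridge I (Finset.mem_of_mem_filter I hI)
  · exact hS.pairwiseDisjoint_bridge.subset (Finset.coe_subset.mpr (Finset.filter_subset _ _))
  · intro I hI B hB
    obtain ⟨hI𝓘, hIpar⟩ := Finset.mem_filter.mp hI
    obtain rfl | hB := Finset.mem_insert.mp hB
    · have hII₀ : I ≠ I₀ := by rintro rfl; exact hIpar ⟨h₁, h₂⟩
      refine Disjoint.union_right (Disjoint.union_right ?_ ?_) ?_
      · exact hS.disjoint_bridge_branch I hI𝓘 B₁ hB₁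
      · exact hS.pairwiseDisjoint_bridge hI𝓘 hI₀ hII₀
      · exact hS.disjoint_bridge_branch I hI𝓘 B₂ hB₂
    · exact hS.disjoint_bridge_branch I hI𝓘 B (hmemN hB)
  · intro I hI
    obtain ⟨hI𝓘, hIpar⟩ := Finset.mem_filter.mp hI
    exact hS.exists_ends_merge hB₁ hB₂ hI₀ hI𝓘 hIpar

theorem card_bridges_le {t : ℕ} (hfree : ¬ G.HasMinor (completeBipartiteGraph (Fin 2) (Fin t)))
    (hS : G.BridgeSystem N 𝓘) : 𝓘.card ≤ (t - 1) * N.card := by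
  classical
  induction hn : N.card using Nat.strong_induction_on generalizing N 𝓘 with
  | _ n ih =>
  obtain rfl | ⟨I₀, hI₀⟩ := 𝓘.eq_empty_or_nonempty
  · simp
  obtain ⟨B₁, hB₁, B₂, hB₂, hne, h₁, h₂⟩ := hS.exists_ends I₀ hI₀
  have hn2 : 2 ≤ n := hn ▸ Finset.one_lt_card.mpr ⟨B₁, hB₁, B₂, hB₂, hne⟩
  have hN' : (insert (B₁ ∪ I₀ ∪ B₂) ((N.erase B₁).erase B₂)).card ≤ n - 1 := by
    have := Finset.card_insert_le (B₁ ∪ I₀ ∪ B₂) ((N.erase B₁).erase B₂)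
    rw [Finset.card_erase_of_mem (Finset.mem_erase.mpr ⟨hne.symm, hB₂⟩),
      Finset.card_erase_of_mem hB₁, hn] at this
    omega
  have hrest := ih _ (by omega) (hS.merge hB₁ hB₂ hI₀ h₁ h₂) rfl
  have hpar := hS.card_parallel_le hfree hB₁ hB₂ hne
  rw [← Finset.card_filter_add_card_filter_not (fun I => G.SetsAdj I B₁ ∧ G.SetsAdj I B₂)]
  calc _ ≤ (t - 1) + (t - 1) * (n - 1) :=
        add_le_add hpar (hrest.trans (Nat.mul_le_mul_left _ hN'))
    _ = (t - 1) * n := by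
        rw [add_comm, ← Nat.mul_succ, Nat.succ_eq_add_one, Nat.sub_add_cancel (by omega)]

end BridgeSystem

end SimpleGraph

namespace SimpleGraph.Walk

variable {V : Type*} {G : SimpleGraph V} {u v s s' : V}

def interior (w : G.Walk u v) : Set V :=
  {x | x ∈ w.support ∧ x ≠ u ∧ x ≠ v}

lemma exists_eq_cons_concat_of_interior_nonempty (w : G.Walk u v) (h : w.interior.Nonempty) :
    ∃ (s s' : V) (hus : G.Adj u s) (m : G.Walk s s') (hs'v : G.Adj s' v),
      w = cons hus (m.concat hs'v) := by
  obtain ⟨x, hx, hxu, hxv⟩ := h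
  cases w with
  | nil => simp_all
  | cons hus p =>
    cases p with
    | nil => simp_all
    | cons h' p' =>
      exact ⟨_, _, hus, (cons h' p').dropLast, adj_penultimate not_nil_cons,
        by rw [concat_dropLast]⟩

lemma interior_cons_concat_subset (hus : G.Adj u s) (m : G.Walk s s') (hs'v : G.Adj s' v) :
    (cons hus (m.concat hs'v)).interior ⊆ {x | x ∈ m.support} := by
  rintro x ⟨hx, hxu, hxv⟩
  simp_all [support_concat]

lemma IsPath.interior_cons_concat {hus : G.Adj u s} {m : G.Walk s s'} {hs'v : G.Adj s' v}
    (hw : (cons hus (m.concat hs'v)).IsPath) :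
    (cons hus (m.concat hs'v)).interior = {x | x ∈ m.support} := by
  refine (interior_cons_concat_subset hus m hs'v).antisymm fun x (hx : x ∈ m.support) => ?_
  have hnd := hw.support_nodup
  simp only [support_cons, support_concat, List.nodup_cons, List.nodup_append, List.mem_append,
    List.mem_singleton] at hnd
  refine ⟨by simp [support_concat, hx], ?_, ?_⟩
  · rintro rfl; exact hnd.1 (Or.inl hx)
  · rintro rfl; exact hnd.2.2.2 _ hx _ rfl rfl

lemma ncard_interior_le (w : G.Walk u v) : w.interior.ncard ≤ w.length - 1 := by
  classical
  rcases w.interior.eq_empty_or_nonempty with h | h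
  · simp [h]
  obtain ⟨s, s', hus, m, hs'v, rfl⟩ := w.exists_eq_cons_concat_of_interior_nonempty h
  calc _ ≤ ({x | x ∈ m.support} : Set V).ncard :=
        Set.ncard_le_ncard (interior_cons_concat_subset hus m hs'v) (List.finite_toSet _)
    _ ≤ m.support.length := by
        rw [← List.coe_toFinset, Set.ncard_coe_finset]; exact List.toFinset_card_le _
    _ = _ := by simp

lemma IsPath.connected_induce_interior {w : G.Walk u v} (hw : w.IsPath)
    (h : w.interior.Nonempty) : (G.induce w.interior).Connected := by
  obtain ⟨s, s', hus, m, hs'v, rfl⟩ := w.exists_eq_cons_concat_of_interior_nonempty h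
  rw [hw.interior_cons_concat]
  exact m.connected_induce_support

lemma IsPath.setsAdj_interior {w : G.Walk u v} (hw : w.IsPath) (h : w.interior.Nonempty) :
    G.SetsAdj w.interior {u} ∧ G.SetsAdj w.interior {v} := by
  obtain ⟨s, s', hus, m, hs'v, rfl⟩ := w.exists_eq_cons_concat_of_interior_nonempty h
  rw [hw.interior_cons_concat]
  exact ⟨⟨s, m.start_mem_support, u, rfl, hus.symm⟩, ⟨s', m.end_mem_support, v, rfl, hs'v⟩⟩

lemma IsPath.ne_of_interior_nonempty {w : G.Walk u v} (hw : w.IsPath)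
    (h : w.interior.Nonempty) : u ≠ v := by
  rintro rfl
  obtain ⟨x, hx, hxu, -⟩ := h
  rw [nil_iff_support_eq.mp (isPath_iff_nil.mp hw), List.mem_singleton] at hx
  exact hxu hx

end SimpleGraph.Walk

section QPaths

variable {V : Type*} {G : SimpleGraph V} {Q : Set V} {h : ℕ} {p q : Σ u v : V, G.Walk u v}

lemma IsQPathOf.disjoint_interior (hp : IsQPathOf G Q h p) : Disjoint p.2.2.interior Q :=
  Set.disjoint_left.mpr fun x ⟨hx, hxu, hxv⟩ hxQ => (hp.2.2.2.1 x hx hxQ).elim hxu hxv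

lemma IsQPathOf.support_subset (hp : IsQPathOf G Q h p) :
    {x | x ∈ p.2.2.support} ⊆ Q ∪ p.2.2.interior := by
  intro x hx
  by_cases hxu : x = p.1
  · exact Or.inl (hxu ▸ hp.2.1)
  by_cases hxv : x = p.2.1
  · exact Or.inl (hxv ▸ hp.2.2.1)
  exact Or.inr ⟨hx, hxu, hxv⟩

lemma IntDisj.disjoint_interior (hpq : IntDisj p q) : Disjoint p.2.2.interior q.2.2.interior :=
  Set.disjoint_left.mpr fun x ⟨hx, hxu, hxv⟩ ⟨hx', _⟩ => (hpq x hx hx').1.elim hxu hxv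

lemma IsQPathOf.exists_mem_interior_of_not_intDisj {h' : ℕ} (hp : IsQPathOf G Q h p)
    (hq : IsQPathOf G Q h' q) (hpq : ¬ IntDisj p q) :
    ∃ x ∈ p.2.2.support, x ∈ q.2.2.interior := by
  simp only [IntDisj, not_forall, not_and_or] at hpq
  obtain ⟨x, hxp, hxq, hend⟩ := hpq
  refine ⟨x, hxp, hxq, ?_⟩
  rcases hend with hxp' | hxq'
  · have hxQ : x ∉ Q := fun hxQ => hxp' (hp.2.2.2.1 x hxp hxQ)
    exact ⟨fun h => hxQ (h ▸ hq.2.1), fun h => hxQ (h ▸ hq.2.2.1)⟩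
  · exact not_or.mp hxq'

open scoped Classical in
lemma bridgeSystem_of_qPaths [Finite V] {P : Set (Σ u v : V, G.Walk u v)}
    (hP : ∀ p ∈ P, IsQPathOf G Q h p) (hPdisj : ∀ p ∈ P, ∀ q ∈ P, p ≠ q → IntDisj p q) :
    G.BridgeSystem (Q.toFinite.toFinset.image ({·}))
      (Set.toFinite {I | I.Nonempty ∧ ∃ p ∈ P, p.2.2.interior = I}).toFinset := by
  refine ⟨?_, ?_, ?_, ?_, ?_, ?_⟩ <;>
    simp only [Set.Finite.mem_toFinset, Finset.mem_image, Finset.coe_image,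
      Set.Finite.coe_toFinset]
  · rintro _ ⟨x, -, rfl⟩
    exact Connected.of_subsingleton
  · rintro _ ⟨x, -, rfl⟩ _ ⟨y, -, rfl⟩ hxy
    exact Set.disjoint_singleton.mpr fun h => hxy (h ▸ rfl)
  · rintro _ ⟨hI, p, hp, rfl⟩
    exact (hP p hp).1.connected_induce_interior hI
  · rintro _ ⟨-, p, hp, rfl⟩ _ ⟨-, q, hq, rfl⟩ hpq
    exact IntDisj.disjoint_interior (hPdisj p hp q hq (by rintro rfl; exact hpq rfl))
  · rintro _ ⟨-, p, hp, rfl⟩ _ ⟨x, hx, rfl⟩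
    exact (hP p hp).disjoint_interior.mono_right (Set.singleton_subset_iff.mpr hx)
  · rintro _ ⟨hI, p, hp, rfl⟩
    obtain ⟨hstart, hend⟩ := (hP p hp).1.setsAdj_interior hI
    exact ⟨_, ⟨p.1, (hP p hp).2.1, rfl⟩, _, ⟨p.2.1, (hP p hp).2.2.1, rfl⟩,
      by simpa using (hP p hp).1.ne_of_interior_nonempty hI, hstart, hend⟩

lemma ncard_qPath_vertices_le [Finite V] {t : ℕ}
    (hfree : ¬ G.HasMinor (completeBipartiteGraph (Fin 2) (Fin t)))
    {P : Set (Σ u v : V, G.Walk u v)} (hP : ∀ p ∈ P, IsQPathOf G Q h p)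
    (hPdisj : ∀ p ∈ P, ∀ q ∈ P, p ≠ q → IntDisj p q) :
    {x : V | ∃ p ∈ P, x ∈ p.2.2.support}.ncard ≤ Q.ncard + (t - 1) * Q.ncard * (h - 1) := by
  classical
  set 𝓘 := (Set.toFinite {I | I.Nonempty ∧ ∃ p ∈ P, p.2.2.interior = I}).toFinset
  have hcard : 𝓘.card ≤ (t - 1) * Q.ncard := by
    calc 𝓘.card ≤ (t - 1) * (Q.toFinite.toFinset.image ({·})).card :=
          (bridgeSystem_of_qPaths hP hPdisj).card_bridges_le hfree
      _ = (t - 1) * Q.ncard := by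
          rw [Finset.card_image_of_injective _ Set.singleton_injective,
            Set.ncard_eq_toFinset_card Q]
  have hsub : {x | ∃ p ∈ P, x ∈ p.2.2.support} ⊆ Q ∪ ⋃ I ∈ 𝓘, I := by
    rintro x ⟨p, hp, hx⟩
    refine ((hP p hp).support_subset hx).imp_right fun hxI => Set.mem_biUnion ?_ hxI
    exact (Set.Finite.mem_toFinset _).mpr ⟨⟨x, hxI⟩, p, hp, rfl⟩
  have hsize : ∀ I ∈ 𝓘, I.ncard ≤ h - 1 := by
    intro I hI
    obtain ⟨-, p, hp, rfl⟩ := (Set.Finite.mem_toFinset _).mp hI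
    exact p.2.2.ncard_interior_le.trans (Nat.sub_le_sub_right (hP p hp).2.2.2.2 1)
  calc _ ≤ (Q ∪ ⋃ I ∈ 𝓘, I).ncard := Set.ncard_le_ncard hsub (Set.toFinite _)
    _ ≤ Q.ncard + (⋃ I ∈ 𝓘, I).ncard := Set.ncard_union_le _ _
    _ ≤ Q.ncard + ∑ I ∈ 𝓘, I.ncard := by gcongr; exact 𝓘.set_ncard_biUnion_le id
    _ ≤ Q.ncard + 𝓘.card * (h - 1) := by gcongr; exact Finset.sum_le_card_nsmul _ _ _ hsize
    _ ≤ _ := by gcongr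

end QPaths

/-- Let `Pfam` be a maximal family of pairwise internally disjoint `Q`-paths of length at
most `h` in a `K_{2,t}`-minor-free graph (`t ≥ 2`).  Then the set `Q'` of vertices on
paths of `Pfam` satisfies `|Q'| ≤ (t+1)²(h+1)|Q|/2`, and every `Q`-path of length at most
`h` not in `Pfam` contains an internal vertex of some path of `Pfam`. -/
theorem maximal_qPath_family {V : Type*} [Fintype V]
    (t h : ℕ) (ht : 2 ≤ t) (H : SimpleGraph V)
    (hfree : ¬ H.HasMinor (completeBipartiteGraph (Fin 2) (Fin t)))
    (Q : Set V) (Pfam : Set (Σ u v : V, H.Walk u v))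
    (hP : ∀ p ∈ Pfam, IsQPathOf H Q h p)
    (hPdisj : ∀ p ∈ Pfam, ∀ q ∈ Pfam, p ≠ q → IntDisj p q)
    (hPmax : ∀ p ∉ Pfam, IsQPathOf H Q h p → ∃ q ∈ Pfam, ¬ IntDisj p q) :
    2 * {x : V | ∃ p ∈ Pfam, x ∈ p.2.2.support}.ncard ≤ (t + 1) ^ 2 * (h + 1) * Q.ncard ∧
    ∀ p ∉ Pfam, IsQPathOf H Q h p →
      ∃ q ∈ Pfam, ∃ x ∈ p.2.2.support, x ∈ q.2.2.support ∧ x ≠ q.1 ∧ x ≠ q.2.1 := by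
  refine ⟨?_, fun p hp hQp => ?_⟩
  · have hcount := ncard_qPath_vertices_le hfree hP hPdisj
    have ht' : (t - 1) * (h - 1) ≤ t * (h + 1) := Nat.mul_le_mul (by omega) (by omega)
    calc 2 * _ ≤ 2 * (Q.ncard + t * (h + 1) * Q.ncard) := by
          have := Nat.mul_le_mul_right Q.ncard ht'
          rw [mul_right_comm] at hcount
          omega
      _ = (2 + 2 * (t * (h + 1))) * Q.ncard := by ring
      _ ≤ (t + 1) ^ 2 * (h + 1) * Q.ncard := by
          gcongr
          have : 2 * 1 ≤ (t ^ 2 + 1) * (h + 1) := Nat.mul_le_mul (by nlinarith) (by omega)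
          linarith
  · obtain ⟨q, hq, hpq⟩ := hPmax p hp hQp
    exact ⟨q, hq, hQp.exists_mem_interior_of_not_intDisj (hP q hq) hpq⟩
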